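/- arXiv:1811.01320 — 2 statements merged into one kernel-verified Lean document; each statement's English description precedes it below -/
import Mathlib

section
/- If the beliefs Π satisfy convex independence, then optimal full extraction holds: for every value function v : T → ℝ there exists a menu c : T → ℝ^S achieving optimal full extraction for (Π, v). -/
noncomputable section

/-- Euclidean inner product on ℝ^S. -/
def dotp {S : Type*} [Fintype S] (x y : S → ℝ) : ℝ := ∑ s, x s * y s

/-- The contract `c t` is mixed-strategy optimal for type `t` in the menu `c`:
its expected cost is at most that of every mixed strategy over the menu, for every belief in `P t`. -/
def MixedOptimal {S T : Type*} [Fintype S] [Fintype T]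
    (P : T → Set (S → ℝ)) (c : T → (S → ℝ)) (t : T) : Prop :=
  ∀ σ ∈ stdSimplex ℝ T, ∀ π ∈ P t, dotp π (c t) ≤ ∑ s, σ s * dotp π (c s)

/-- A menu `c` achieves optimal full extraction for beliefs `P` and values `v`. -/
def OptimalFullExtraction {S T : Type*} [Fintype S] [Fintype T]
    (P : T → Set (S → ℝ)) (v : T → ℝ) (c : T → (S → ℝ)) : Prop :=
  ∀ t : T, MixedOptimal P c t ∧ (∀ π ∈ P t, dotp π (c t) ≤ v t) ∧
    (∃ π ∈ P t, dotp π (c t) = v t)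

/-!
Separate the compact convex set `Π(t)` from the closed convex hull of the other types' beliefs by
a linear functional (Hahn–Banach). On the simplex every linear functional plus a constant is the
expected payment of a contract, so after an affine normalisation type `t` gets a contract `g t`
costing at most `0` under its own beliefs (with equality at a maximiser) and at least `1` under
every other type's beliefs. Scaling `g t` by `V - v t`, where `V ≥ max v`, and adding `v t` then
extracts `v t` from type `t` while costing every other type at least `V`.
-/

section
variable {S T : Type*} [Fintype S] [Fintype T]

theorem dotp_eq_linearMap [DecidableEq S] (f : (S → ℝ) →ₗ[ℝ] ℝ) (π : S → ℝ) :
    dotp π (fun i => f fun j => if i = j then 1 else 0) = f π :=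
  (f.pi_apply_eq_sum_univ π).symm

theorem dotp_const_add_mul {π : S → ℝ} (hπ : π ∈ stdSimplex ℝ S) (a b : ℝ) (g : S → ℝ) :
    dotp π (fun j => a + b * g j) = a + b * dotp π g := by
  simp only [dotp, mul_add, Finset.sum_add_distrib, ← Finset.sum_mul, hπ.2, one_mul,
    Finset.mul_sum]
  exact congrArg _ (Finset.sum_congr rfl fun _ _ => by ring)

theorem mixedOptimal_of_forall_le {P : T → Set (S → ℝ)} {c : T → S → ℝ} {t : T}
    (h : ∀ π ∈ P t, ∀ s, dotp π (c t) ≤ dotp π (c s)) : MixedOptimal P c t := by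
  intro σ hσ π hπ
  calc dotp π (c t) = ∑ s, σ s * dotp π (c t) := by rw [← Finset.sum_mul, hσ.2, one_mul]
    _ ≤ ∑ s, σ s * dotp π (c s) :=
      Finset.sum_le_sum fun s _ => mul_le_mul_of_nonneg_left (h π hπ s) (hσ.1 s)

theorem exists_exposing_vector {A B : Set (S → ℝ)} (hAc : Convex ℝ A) (hA : IsCompact A)
    (hAne : A.Nonempty) (hAsub : A ⊆ stdSimplex ℝ S) (hBc : Convex ℝ B) (hB : IsClosed B)
    (hAB : Disjoint A B) :
    ∃ g : S → ℝ, (∀ π ∈ A, dotp π g ≤ 0) ∧ (∃ π ∈ A, dotp π g = 0) ∧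
      ∀ π ∈ B, π ∈ stdSimplex ℝ S → 1 ≤ dotp π g := by
  classical
  obtain ⟨f, u, w, hfA, huw, hfB⟩ := geometric_hahn_banach_compact_closed hAc hA hBc hB hAB
  obtain ⟨π₀, hπ₀, hmax⟩ := hA.exists_isMaxOn hAne f.continuous.continuousOn
  have hgap : 0 < w - f π₀ := by linarith [hfA π₀ hπ₀]
  set g : S → ℝ := fun i =>
    -(f π₀ / (w - f π₀)) + (w - f π₀)⁻¹ * f fun j => if i = j then 1 else 0
  have hg : ∀ π ∈ stdSimplex ℝ S, dotp π g = (f π - f π₀) / (w - f π₀) := by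
    intro π hπ
    have hf := dotp_eq_linearMap f.toLinearMap π
    rw [ContinuousLinearMap.coe_coe] at hf
    rw [dotp_const_add_mul hπ, hf]
    field_simp
    ring
  refine ⟨g, fun π hπ => ?_, ⟨π₀, hπ₀, ?_⟩, fun π hπ hπS => ?_⟩
  · rw [hg π (hAsub hπ)]
    exact div_nonpos_of_nonpos_of_nonneg (sub_nonpos.mpr (hmax hπ)) hgap.le
  · rw [hg π₀ (hAsub hπ₀), sub_self, zero_div]
  · rw [hg π hπS, le_div_iff₀ hgap]
    linarith [hfB π hπ]

theorem optimalFullExtraction_of_exposing {P : T → Set (S → ℝ)}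
    (hsub : ∀ t, P t ⊆ stdSimplex ℝ S) (g : T → S → ℝ)
    (hle : ∀ t, ∀ π ∈ P t, dotp π (g t) ≤ 0) (heq : ∀ t, ∃ π ∈ P t, dotp π (g t) = 0)
    (hge : ∀ t s, s ≠ t → ∀ π ∈ P s, 1 ≤ dotp π (g t)) {v : T → ℝ} {V : ℝ}
    (hV : ∀ t, v t ≤ V) :
    OptimalFullExtraction P v (fun t j => v t + (V - v t) * g t j) := by
  have hIR : ∀ t, ∀ π ∈ P t, dotp π (fun j => v t + (V - v t) * g t j) ≤ v t := by
    intro t π hπ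
    rw [dotp_const_add_mul (hsub t hπ)]
    nlinarith [hV t, hle t π hπ]
  refine fun t => ⟨mixedOptimal_of_forall_le fun π hπ s => ?_, hIR t, ?_⟩
  · rcases eq_or_ne s t with rfl | hst
    · exact le_rfl
    · calc dotp π (fun j => v t + (V - v t) * g t j) ≤ v t := hIR t π hπ
        _ ≤ v s + (V - v s) * 1 := by linarith [hV t]
        _ ≤ v s + (V - v s) * dotp π (g s) := by
          gcongr
          · linarith [hV s]
          · exact hge s t hst.symm π hπ
        _ = dotp π (fun j => v s + (V - v s) * g s j) :=
          (dotp_const_add_mul (hsub t hπ) _ _ _).symm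
  · obtain ⟨π, hπ, hzero⟩ := heq t
    exact ⟨π, hπ, by rw [dotp_const_add_mul (hsub t hπ), hzero, mul_zero, add_zero]⟩

end

theorem stmt_4_general {S T : Type*} [Fintype S] [Fintype T]
    (P : T → Set (S → ℝ))
    (hne : ∀ t, (P t).Nonempty) (hcl : ∀ t, IsClosed (P t))
    (hcv : ∀ t, Convex ℝ (P t)) (hsub : ∀ t, P t ⊆ stdSimplex ℝ S)
    (hci : ∀ t : T, P t ∩ closure (convexHull ℝ (⋃ s ∈ {s : T | s ≠ t}, P s)) = ∅)
    (v : T → ℝ) :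
    ∃ c : T → (S → ℝ), OptimalFullExtraction P v c := by
  have hexp : ∀ t, ∃ g : S → ℝ, (∀ π ∈ P t, dotp π g ≤ 0) ∧ (∃ π ∈ P t, dotp π g = 0) ∧
      ∀ s, s ≠ t → ∀ π ∈ P s, 1 ≤ dotp π g := by
    intro t
    obtain ⟨g, hle, heq, hge⟩ := exists_exposing_vector (hcv t)
      ((isCompact_stdSimplex ℝ S).of_isClosed_subset (hcl t) (hsub t)) (hne t) (hsub t)
      (convex_convexHull ℝ _).closure isClosed_closure
      (Set.disjoint_iff_inter_eq_empty.mpr (hci t))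
    refine ⟨g, hle, heq, fun s hst π hπ => hge π ?_ (hsub s hπ)⟩
    exact subset_closure (subset_convexHull ℝ _ (Set.mem_biUnion (x := s) hst hπ))
  choose g hle heq hge using hexp
  obtain ⟨V, hV⟩ := (Set.finite_range v).bddAbove
  exact ⟨_, optimalFullExtraction_of_exposing hsub g hle heq hge fun t => hV ⟨t, rfl⟩⟩

theorem stmt_4 {S T : Type*} [Fintype S] [Fintype T] [Nonempty S] [Nonempty T]
    (P : T → Set (S → ℝ))
    (hne : ∀ t, (P t).Nonempty) (hcl : ∀ t, IsClosed (P t))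
    (hcv : ∀ t, Convex ℝ (P t)) (hsub : ∀ t, P t ⊆ stdSimplex ℝ S)
    (hci : ∀ t : T, P t ∩ closure (convexHull ℝ (⋃ s ∈ {s : T | s ≠ t}, P s)) = ∅)
    (v : T → ℝ) :
    ∃ c : T → (S → ℝ), OptimalFullExtraction P v c :=
  stmt_4_general P hne hcl hcv hsub hci v
end
end

section
/- Suppose the beliefs Π are fully overlapping. Let T* ⊆ T be nonempty, let t₁ ∈ T* satisfy v(t₁) ≤ v(t) for all t ∈ T*, and let the designer's belief π_d ∈ Δ(S) satisfy π_d ∈ Π(t₁). Then: (a) every menu c : T* → ℝ^S that is incentive compatible and individually rational for T* satisfies π_d·c(t) ≤ v(t₁) for every t ∈ T* (so the designer's expected revenue ∑_{t∈T*} π_d·c(t) is at most |T*|·v(t₁)); and (b) the constant menu assigning every t ∈ T* the deterministic contract (v(t₁),…,v(t₁)) ∈ ℝ^S is incentive compatible and individually rational for T* and attains this bound. -/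
noncomputable section

/-- A set `A ⊆ ℝ^S` has full dimension if the only vector orthogonal to all of `A` is `0`. -/
def FullDim {S : Type*} [Fintype S] (A : Set (S → ℝ)) : Prop :=
  ∀ x : S → ℝ, (∀ a ∈ A, dotp a x = 0) → x = 0

/-- `c` is incentive compatible for the subset `Ts` of types. -/
def ICFor {S T : Type*} [Fintype S]
    (P : T → Set (S → ℝ)) (Ts : Set T) (c : T → (S → ℝ)) : Prop :=
  ∀ t ∈ Ts, ∀ s ∈ Ts, ∀ π ∈ P t, dotp π (c t) ≤ dotp π (c s)

/-- `c` is individually rational for the subset `Ts` of types. -/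
def IRFor {S T : Type*} [Fintype S]
    (P : T → Set (S → ℝ)) (v : T → ℝ) (Ts : Set T) (c : T → (S → ℝ)) : Prop :=
  ∀ t ∈ Ts, ∀ π ∈ P t, dotp π (c t) ≤ v t

/-!
Under full overlap an incentive compatible menu is constant: for any two types `t, t'`, incentive
compatibility in both directions gives `π · c t = π · c t'` for every `π ∈ Π(t) ∩ Π(t')`, and that
set spans `ℝ^S`. So every type receives the contract of the lowest-value type `t₁`, whose
individual rationality at the designer's belief `π_d ∈ Π(t₁)` caps each payment at `v t₁`.
-/

open Finset

theorem dotp_eq_dotProduct {S : Type*} [Fintype S] (x y : S → ℝ) : dotp x y = x ⬝ᵥ y := rfl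

theorem dotp_const_of_mem_stdSimplex {S : Type*} [Fintype S] {π : S → ℝ}
    (hπ : π ∈ stdSimplex ℝ S) (r : ℝ) : dotp π (fun _ => r) = r := by
  rw [dotp, ← sum_mul, hπ.2, one_mul]

theorem FullDim.eq_of_dotp_eq {S : Type*} [Fintype S] {A : Set (S → ℝ)} (hA : FullDim A)
    {x y : S → ℝ} (h : ∀ a ∈ A, dotp a x = dotp a y) : x = y :=
  sub_eq_zero.mp <| hA (x - y) fun a ha => by
    rw [dotp_eq_dotProduct, dotProduct_sub, ← dotp_eq_dotProduct, ← dotp_eq_dotProduct, h a ha,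
      sub_self]

section Menus

variable {S T : Type*} [Fintype S] {P : T → Set (S → ℝ)} {Ts : Set T} {c : T → S → ℝ}

theorem ICFor.eq_of_fullDim (hIC : ICFor P Ts c) {t t' : T} (ht : t ∈ Ts) (ht' : t' ∈ Ts)
    (hov : FullDim (P t ∩ P t')) : c t = c t' :=
  hov.eq_of_dotp_eq fun a ha => (hIC t ht t' ht' a ha.1).antisymm (hIC t' ht' t ht a ha.2)

theorem ICFor.dotp_le_of_fullDim {v : T → ℝ} (hIC : ICFor P Ts c) (hIR : IRFor P v Ts c)
    (hov : ∀ t t', FullDim (P t ∩ P t')) {t₁ : T} (ht₁ : t₁ ∈ Ts) {π : S → ℝ} (hπ : π ∈ P t₁)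
    {t : T} (ht : t ∈ Ts) : dotp π (c t) ≤ v t₁ := by
  rw [hIC.eq_of_fullDim ht ht₁ (hov t t₁)]
  exact hIR t₁ ht₁ π hπ

theorem icFor_const (r : ℝ) : ICFor P Ts (fun _ _ => r) :=
  fun _ _ _ _ _ _ => le_rfl

theorem irFor_const {v : T → ℝ} (hsub : ∀ t, P t ⊆ stdSimplex ℝ S) {r : ℝ}
    (hr : ∀ t ∈ Ts, r ≤ v t) : IRFor P v Ts (fun _ _ => r) := fun t ht π hπ => by
  rw [dotp_const_of_mem_stdSimplex (hsub t hπ)]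
  exact hr t ht

end Menus

theorem stmt_9_general {S T : Type*} [Fintype S] [Fintype T]
    (P : T → Set (S → ℝ))
    (hsub : ∀ t, P t ⊆ stdSimplex ℝ S)
    (v : T → ℝ)
    (hov : ∀ t t' : T, FullDim (P t ∩ P t'))
    (Ts : Set T) (t₁ : T) (ht₁ : t₁ ∈ Ts)
    (hmin : ∀ t ∈ Ts, v t₁ ≤ v t)
    (πd : S → ℝ) (hπd : πd ∈ P t₁) :
    -- (a) any incentive compatible and individually rational menu for Ts yields the
    -- designer expected revenue at most `v t₁` from each type, hence at most `|Ts| * v t₁` in total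
    (∀ c : T → (S → ℝ), ICFor P Ts c → IRFor P v Ts c →
      (∀ t ∈ Ts, dotp πd (c t) ≤ v t₁) ∧
      ∑ t ∈ Ts.toFinite.toFinset, dotp πd (c t) ≤ (Ts.toFinite.toFinset.card : ℝ) * v t₁) ∧
    -- (b) the constant deterministic menu `v t₁` is incentive compatible and individually
    -- rational for Ts and attains this bound
    (ICFor P Ts (fun _ _ => v t₁) ∧ IRFor P v Ts (fun _ _ => v t₁) ∧
      (∀ t ∈ Ts, dotp πd ((fun _ _ => v t₁ : T → S → ℝ) t) = v t₁) ∧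
      ∑ t ∈ Ts.toFinite.toFinset, dotp πd ((fun _ _ => v t₁ : T → S → ℝ) t)
        = (Ts.toFinite.toFinset.card : ℝ) * v t₁) := by
  have hπd_const : dotp πd (fun _ => v t₁) = v t₁ :=
    dotp_const_of_mem_stdSimplex (hsub t₁ hπd) (v t₁)
  refine ⟨fun c hIC hIR => ?_, icFor_const (v t₁), irFor_const hsub hmin, fun _ _ => hπd_const, ?_⟩
  · have hbound : ∀ t ∈ Ts, dotp πd (c t) ≤ v t₁ := fun t ht =>
      hIC.dotp_le_of_fullDim hIR hov ht₁ hπd ht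
    refine ⟨hbound, ?_⟩
    rw [← nsmul_eq_mul]
    exact sum_le_card_nsmul _ _ _ fun t ht => hbound t (Ts.toFinite.mem_toFinset.mp ht)
  · rw [sum_congr rfl fun _ _ => hπd_const, sum_const, nsmul_eq_mul]

theorem stmt_9 {S T : Type*} [Fintype S] [Fintype T] [Nonempty S] [Nonempty T]
    (P : T → Set (S → ℝ))
    (hne : ∀ t, (P t).Nonempty) (hcl : ∀ t, IsClosed (P t))
    (hcv : ∀ t, Convex ℝ (P t)) (hsub : ∀ t, P t ⊆ stdSimplex ℝ S)
    (v : T → ℝ)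
    (hov : ∀ t t' : T, FullDim (P t ∩ P t'))
    (Ts : Set T) (hTs : Ts.Nonempty) (t₁ : T) (ht₁ : t₁ ∈ Ts)
    (hmin : ∀ t ∈ Ts, v t₁ ≤ v t)
    (πd : S → ℝ) (hπd : πd ∈ P t₁) :
    -- (a) any incentive compatible and individually rational menu for Ts yields the
    -- designer expected revenue at most `v t₁` from each type, hence at most `|Ts| * v t₁` in total
    (∀ c : T → (S → ℝ), ICFor P Ts c → IRFor P v Ts c →
      (∀ t ∈ Ts, dotp πd (c t) ≤ v t₁) ∧
      ∑ t ∈ Ts.toFinite.toFinset, dotp πd (c t) ≤ (Ts.toFinite.toFinset.card : ℝ) * v t₁) ∧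
    -- (b) the constant deterministic menu `v t₁` is incentive compatible and individually
    -- rational for Ts and attains this bound
    (ICFor P Ts (fun _ _ => v t₁) ∧ IRFor P v Ts (fun _ _ => v t₁) ∧
      (∀ t ∈ Ts, dotp πd ((fun _ _ => v t₁ : T → S → ℝ) t) = v t₁) ∧
      ∑ t ∈ Ts.toFinite.toFinset, dotp πd ((fun _ _ => v t₁ : T → S → ℝ) t)
        = (Ts.toFinite.toFinset.card : ℝ) * v t₁) :=
  stmt_9_general P hsub v hov Ts t₁ ht₁ hmin πd hπd
end
end
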